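/- Suppose G has at least one X–Y separator, let r be the minimum size of an X–Y separator of G, and let K be the unique important X–Y separator of size r. Then every important X–Y separator K* of G with K* ≠ K satisfies K* > K. -/

import Mathlib

variable {V : Type*}

/-- `K` is an `X`–`Y` separator of `G`: `K` avoids `X ∪ Y` and every walk
from a vertex of `X` to a vertex of `Y` meets `K` (i.e. there is no
`X`–`Y` path in `G \ K`). -/
def IsSeparator (G : SimpleGraph V) (X Y K : Set V) : Prop :=
  K ⊆ (X ∪ Y)ᶜ ∧
  ∀ x ∈ X, ∀ y ∈ Y, ∀ w : G.Walk x y, ∃ v ∈ w.support, v ∈ K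

/-- `NR G A B`: the vertices of `G \ B` that are not reachable from `A` in `G \ B`. -/
def NR (G : SimpleGraph V) (A B : Set V) : Set V :=
  {v | v ∉ B ∧ ¬ ∃ a ∈ A, ∃ w : G.Walk a v, ∀ x ∈ w.support, x ∉ B}

/-- `Reach G A B`: the vertices reachable from `A` in `G \ B`. -/
def Reach (G : SimpleGraph V) (A B : Set V) : Set V :=
  {v | ∃ a ∈ A, ∃ w : G.Walk a v, ∀ x ∈ w.support, x ∉ B}

/-- The order on `X`–`Y` separators: `K1 ≤ K2` iff `NR(G,Y,K1) ⊆ NR(G,Y,K2)`. -/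
def SepLE (G : SimpleGraph V) (Y K1 K2 : Set V) : Prop :=
  NR G Y K1 ⊆ NR G Y K2

/-- The strict order on `X`–`Y` separators. -/
def SepLT (G : SimpleGraph V) (Y K1 K2 : Set V) : Prop :=
  NR G Y K1 ⊆ NR G Y K2 ∧ NR G Y K1 ≠ NR G Y K2

/-- A minimal `X`–`Y` separator: no proper subset is an `X`–`Y` separator. -/
def IsMinimalSeparator (G : SimpleGraph V) (X Y K : Set V) : Prop :=
  IsSeparator G X Y K ∧ ∀ K' ⊂ K, ¬ IsSeparator G X Y K'

/-- An important `X`–`Y` separator: a minimal separator `K` such that there is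
no separator `K'` with `K < K'` and `|K'| ≤ |K|`. -/
def IsImportantSeparator (G : SimpleGraph V) (X Y K : Set V) : Prop :=
  IsMinimalSeparator G X Y K ∧
  ¬ ∃ K', IsSeparator G X Y K' ∧ SepLT G Y K K' ∧ K'.ncard ≤ K.ncard

/-- The minimum size of an `X`–`Y` separator of `G`. -/
noncomputable def minSepSize (G : SimpleGraph V) (X Y : Set V) : ℕ :=
  sInf {n | ∃ K, IsSeparator G X Y K ∧ K.ncard = n}

/-- The excess of a separator: its size minus the minimum separator size. -/
noncomputable def excess (G : SimpleGraph V) (X Y K : Set V) : ℕ :=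
  K.ncard - minSepSize G X Y

/-- The graph `Pr(G,X,Y,K)`: the vertices `NR(G,Y,K) \ X` are deleted (here:
made isolated), and every vertex of `X` is made adjacent to every vertex of `K`. -/
def PrGraph (G : SimpleGraph V) (X Y K : Set V) : SimpleGraph V where
  Adj u v := u ≠ v ∧ u ∉ NR G Y K \ X ∧ v ∉ NR G Y K \ X ∧
    (G.Adj u v ∨ (u ∈ X ∧ v ∈ K) ∨ (u ∈ K ∧ v ∈ X))
  symm := by
    constructor
    rintro u v ⟨h1, h2, h3, h4⟩
    refine ⟨h1.symm, h3, h2, ?_⟩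
    rcases h4 with h | h | h
    · exact Or.inl h.symm
    · exact Or.inr (Or.inr ⟨h.2, h.1⟩)
    · exact Or.inr (Or.inl ⟨h.2, h.1⟩)
  loopless := by constructor; rintro v ⟨h1, -⟩; exact h1 rfl

/-- `NSet G X` is `N(X)`: the set of vertices outside `X` adjacent to a vertex of `X`. -/
def NSet (G : SimpleGraph V) (X : Set V) : Set V :=
  {v | v ∉ X ∧ ∃ x ∈ X, G.Adj x v}

/-- `G` is `X`–`Y` normalized: `N(X)` is an `X`–`Y` separator and is
the unique smallest `X`–`Y` separator. -/
def Normalized (G : SimpleGraph V) (X Y : Set V) : Prop :=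
  IsSeparator G X Y (NSet G X) ∧
  ∀ K, IsSeparator G X Y K → K ≠ NSet G X → (NSet G X).ncard < K.ncard

/-- The cover excess `CE(S)`: the minimum excess of an `X`–`Y` separator disjoint from `S`. -/
noncomputable def CE (G : SimpleGraph V) (X Y S : Set V) : ℕ :=
  sInf {n | ∃ K, IsSeparator G X Y K ∧ Disjoint K S ∧ excess G X Y K = n}

/-- A witness of `S`: an `X`–`Y` separator disjoint from `S` whose excess equals `CE(S)`. -/
noncomputable def IsWitness (G : SimpleGraph V) (X Y S K : Set V) : Prop :=
  IsSeparator G X Y K ∧ Disjoint K S ∧ excess G X Y K = CE G X Y S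

/-- An important witness of `S`: a witness of `S` that is an important `X`–`Y` separator. -/
noncomputable def IsImportantWitness (G : SimpleGraph V) (X Y S K : Set V) : Prop :=
  IsWitness G X Y S K ∧ IsImportantSeparator G X Y K

/-! Let `R` and `R*` be the vertex sets reachable from `Y` in `G \ K` and in `G \ K*`.
The neighbourhood function is submodular, `|N(R ∪ R*)| + |N(R ∩ R*)| ≤ |N(R)| + |N(R*)|`,
with `N(R) ⊆ K` and `N(R*) ⊆ K*`; both `N(R ∪ R*)` and `N(R ∩ R*)` are separators, and
the first has size at least `|K| = r`. Hence `L = N(R ∩ R*)` is a separator with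
`|L| ≤ |K*|` lying above both `K` and `K*`, so importance of `K*` forces
`NR(G,Y,K) ⊆ NR(G,Y,L) = NR(G,Y,K*)`.
Equality `NR(G,Y,K) = NR(G,Y,K*)` is ruled out because a minimal separator is
determined by the vertices it leaves unreachable from `Y`. -/

namespace SimpleGraph

variable {G : SimpleGraph V} {A B S T : Set V}

lemma mem_reach_of_adj {u v : V} (hu : u ∈ Reach G A B) (h : G.Adj u v) (hv : v ∉ B) :
    v ∈ Reach G A B := by
  obtain ⟨a, ha, w, hw⟩ := hu
  refine ⟨a, ha, w.concat h, fun z hz => ?_⟩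
  rw [Walk.support_concat, List.mem_append, List.mem_singleton] at hz
  rcases hz with hz | rfl
  exacts [hw z hz, hv]

lemma subset_reach (h : ∀ a ∈ A, a ∉ B) : A ⊆ Reach G A B :=
  fun a ha => ⟨a, ha, Walk.nil, by simpa using h a ha⟩

lemma notMem_of_mem_reach {v : V} (h : v ∈ Reach G A B) : v ∉ B := by
  obtain ⟨a, -, w, hw⟩ := h
  exact hw v w.end_mem_support

lemma nr_eq_compl : NR G A B = (B ∪ Reach G A B)ᶜ := by
  ext v
  simp [NR, Reach]

lemma nr_subset_nr_iff {B' : Set V} :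
    NR G A B ⊆ NR G A B' ↔ B' ∪ Reach G A B' ⊆ B ∪ Reach G A B := by
  rw [nr_eq_compl, nr_eq_compl, Set.compl_subset_compl]

lemma nset_reach_subset : NSet G (Reach G A B) ⊆ B := by
  rintro v ⟨hv, u, hu, huv⟩
  by_contra hvB
  exact hv (mem_reach_of_adj hu huv hvB)

lemma Walk.exists_mem_support_mem_nset {a b : V} (w : G.Walk a b) (ha : a ∈ S) (hb : b ∉ S) :
    ∃ z ∈ w.support, z ∈ NSet G S := by
  induction w with
  | nil => exact absurd ha hb
  | @cons a c b h p ih =>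
    by_cases hc : c ∈ S
    · obtain ⟨z, hz, hzN⟩ := ih hc hb
      exact ⟨z, by simp [hz], hzN⟩
    · exact ⟨c, by simp, hc, a, ha, h⟩

lemma reach_nset_subset (hAS : A ⊆ S) : Reach G A (NSet G S) ⊆ S := by
  rintro v ⟨a, ha, w, hw⟩
  by_contra hv
  obtain ⟨z, hz, hzN⟩ := w.exists_mem_support_mem_nset (hAS ha) hv
  exact hw z hz hzN

lemma nr_subset_nr_nset (hAS : A ⊆ S) (hSR : S ⊆ Reach G A B) :
    NR G A B ⊆ NR G A (NSet G S) := by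
  rw [nr_subset_nr_iff]
  rintro v (⟨hvS, u, hu, huv⟩ | hv)
  · by_cases hvB : v ∈ B
    · exact Or.inl hvB
    · exact Or.inr (mem_reach_of_adj (hSR hu) huv hvB)
  · exact Or.inr (hSR (reach_nset_subset hAS hv))

lemma nset_union_subset : NSet G (S ∪ T) ⊆ NSet G S ∪ NSet G T := by
  rintro v ⟨hv, u, hu | hu, huv⟩
  · exact Or.inl ⟨fun h => hv (Or.inl h), u, hu, huv⟩
  · exact Or.inr ⟨fun h => hv (Or.inr h), u, hu, huv⟩

lemma nset_inter_subset : NSet G (S ∩ T) ⊆ NSet G S ∪ NSet G T := by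
  rintro v ⟨hv, u, hu, huv⟩
  by_cases hvS : v ∈ S
  · exact Or.inr ⟨fun h => hv ⟨hvS, h⟩, u, hu.2, huv⟩
  · exact Or.inl ⟨hvS, u, hu.1, huv⟩

lemma nset_union_inter_nset_inter_subset :
    NSet G (S ∪ T) ∩ NSet G (S ∩ T) ⊆ NSet G S ∩ NSet G T := by
  rintro v ⟨⟨hv, -⟩, -, u, hu, huv⟩
  exact ⟨⟨fun h => hv (Or.inl h), u, hu.1, huv⟩, ⟨fun h => hv (Or.inr h), u, hu.2, huv⟩⟩

lemma ncard_nset_union_add_ncard_nset_inter_le [Finite V] :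
    (NSet G (S ∪ T)).ncard + (NSet G (S ∩ T)).ncard ≤ (NSet G S).ncard + (NSet G T).ncard :=
  calc (NSet G (S ∪ T)).ncard + (NSet G (S ∩ T)).ncard
      = (NSet G (S ∪ T) ∪ NSet G (S ∩ T)).ncard
          + (NSet G (S ∪ T) ∩ NSet G (S ∩ T)).ncard :=
        (Set.ncard_union_add_ncard_inter _ _).symm
    _ ≤ (NSet G S ∪ NSet G T).ncard + (NSet G S ∩ NSet G T).ncard :=
        add_le_add (Set.ncard_le_ncard (Set.union_subset nset_union_subset nset_inter_subset))
          (Set.ncard_le_ncard nset_union_inter_nset_inter_subset)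
    _ = (NSet G S).ncard + (NSet G T).ncard := Set.ncard_union_add_ncard_inter _ _

end SimpleGraph

open SimpleGraph

variable {G : SimpleGraph V} {X Y K K' S : Set V}

namespace IsSeparator

lemma notMem_left (hK : IsSeparator G X Y K) {x : V} (hx : x ∈ X) : x ∉ K :=
  fun h => hK.1 h (Or.inl hx)

lemma notMem_right (hK : IsSeparator G X Y K) {y : V} (hy : y ∈ Y) : y ∉ K :=
  fun h => hK.1 h (Or.inr hy)

lemma disjoint_reach (hK : IsSeparator G X Y K) : Disjoint (Reach G X K) (Reach G Y K) := by
  refine Set.disjoint_left.mpr fun v ⟨x, hx, wx, hwx⟩ ⟨y, hy, wy, hwy⟩ => ?_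
  obtain ⟨z, hz, hzK⟩ := hK.2 x hx y hy (wx.append wy.reverse)
  rw [Walk.mem_support_append_iff, Walk.support_reverse, List.mem_reverse] at hz
  rcases hz with hz | hz
  exacts [hwx z hz hzK, hwy z hz hzK]

lemma disjoint_left_reach_right (hK : IsSeparator G X Y K) : Disjoint X (Reach G Y K) :=
  hK.disjoint_reach.mono_left (subset_reach fun _ => hK.notMem_left)

lemma minSepSize_le (hK : IsSeparator G X Y K) : minSepSize G X Y ≤ K.ncard :=
  Nat.sInf_le ⟨K, hK, rfl⟩

end IsSeparator

lemma isSeparator_nset (hYS : Y ⊆ S) (hXS : Disjoint X S) (hN : NSet G S ⊆ (X ∪ Y)ᶜ) :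
    IsSeparator G X Y (NSet G S) := by
  refine ⟨hN, fun x hx y hy w => ?_⟩
  obtain ⟨z, hz, hzN⟩ :=
    w.reverse.exists_mem_support_mem_nset (hYS hy) (Set.disjoint_left.mp hXS hx)
  rw [Walk.support_reverse, List.mem_reverse] at hz
  exact ⟨z, hz, hzN⟩

lemma isSeparator_nset_of_subset_union (hK : IsSeparator G X Y K) (hK' : IsSeparator G X Y K')
    (hYS : Y ⊆ S) (hS : S ⊆ Reach G Y K ∪ Reach G Y K')
    (hN : NSet G S ⊆ NSet G (Reach G Y K) ∪ NSet G (Reach G Y K')) :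
    IsSeparator G X Y (NSet G S) := by
  refine isSeparator_nset hYS ?_ fun v hv => ?_
  · exact (Set.disjoint_union_right.mpr
      ⟨hK.disjoint_left_reach_right, hK'.disjoint_left_reach_right⟩).mono_right hS
  · rcases hN hv with h | h
    exacts [hK.1 (nset_reach_subset h), hK'.1 (nset_reach_subset h)]

namespace IsMinimalSeparator

lemma exists_adj_reach (hK : IsMinimalSeparator G X Y K) {v : V} (hv : v ∈ K) :
    ∃ c ∈ Reach G X K, G.Adj c v := by
  have hns := hK.2 (K \ {v}) (Set.sdiff_singleton_ssubset.mpr hv)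
  simp only [IsSeparator, Set.sdiff_subset.trans hK.1.1, true_and, not_forall, not_exists,
    not_and] at hns
  obtain ⟨x, hx, y, hy, w, hw⟩ := hns
  have hyR : y ∉ Reach G X K := Set.disjoint_right.mp hK.1.disjoint_reach
    (subset_reach (fun _ => hK.1.notMem_right) hy)
  obtain ⟨z, hz, hzN, c, hc, hcz⟩ := w.exists_mem_support_mem_nset
    (subset_reach (fun _ => hK.1.notMem_left) hx) hyR
  obtain rfl : z = v := by
    by_contra hzv
    exact hw z hz ⟨nset_reach_subset ⟨hzN, c, hc, hcz⟩, hzv⟩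
  exact ⟨c, hc, hcz⟩

lemma subset_of_nr_eq (hK : IsMinimalSeparator G X Y K) (h : NR G Y K = NR G Y K') :
    K ⊆ K' := by
  intro v hv
  by_contra hvK'
  obtain ⟨c, hcX, hcv⟩ := hK.exists_adj_reach hv
  have hcNR : c ∈ NR G Y K' := by
    rw [← h, nr_eq_compl]
    rintro (hcK | hcY)
    exacts [notMem_of_mem_reach hcX hcK, Set.disjoint_left.mp hK.1.disjoint_reach hcX hcY]
  have hvY : v ∈ Reach G Y K' := by
    have hvNR : v ∉ NR G Y K' := h ▸ fun hvNR => hvNR.1 hv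
    rw [nr_eq_compl, Set.notMem_compl_iff] at hvNR
    exact hvNR.resolve_left hvK'
  exact hcNR.2 (mem_reach_of_adj hvY hcv.symm hcNR.1)

end IsMinimalSeparator

lemma exists_isSeparator_sepLE_sepLE [Finite V] (hK : IsSeparator G X Y K)
    (hKcard : K.ncard = minSepSize G X Y) (hK' : IsSeparator G X Y K') :
    ∃ L, IsSeparator G X Y L ∧ SepLE G Y K L ∧ SepLE G Y K' L ∧ L.ncard ≤ K'.ncard := by
  set R := Reach G Y K
  set R' := Reach G Y K'
  have hYR : Y ⊆ R := subset_reach fun _ => hK.notMem_right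
  have hYR' : Y ⊆ R' := subset_reach fun _ => hK'.notMem_right
  have hI : IsSeparator G X Y (NSet G (R ∩ R')) :=
    isSeparator_nset_of_subset_union hK hK' (Set.subset_inter hYR hYR')
      (Set.inter_subset_left.trans Set.subset_union_left) nset_inter_subset
  have hU : IsSeparator G X Y (NSet G (R ∪ R')) :=
    isSeparator_nset_of_subset_union hK hK' (hYR.trans Set.subset_union_left) subset_rfl
      nset_union_subset
  refine ⟨_, hI, nr_subset_nr_nset (Set.subset_inter hYR hYR') Set.inter_subset_left,
    nr_subset_nr_nset (Set.subset_inter hYR hYR') Set.inter_subset_right, ?_⟩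
  have hsub := ncard_nset_union_add_ncard_nset_inter_le (G := G) (S := R) (T := R')
  have hNR : (NSet G R).ncard ≤ K.ncard := Set.ncard_le_ncard nset_reach_subset
  have hNR' : (NSet G R').ncard ≤ K'.ncard := Set.ncard_le_ncard nset_reach_subset
  have hUmin := hU.minSepSize_le
  omega

theorem smallest_important_separator_lt_general
    {V : Type*} [Fintype V] (G : SimpleGraph V) (X Y K : Set V)
    (hK : IsImportantSeparator G X Y K ∧ K.ncard = minSepSize G X Y) :
    ∀ Kstar : Set V, IsImportantSeparator G X Y Kstar → Kstar ≠ K →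
      SepLT G Y K Kstar := by
  obtain ⟨⟨hKmin, -⟩, hKcard⟩ := hK
  intro Kstar ⟨hKsmin, hKsimp⟩ hne
  obtain ⟨L, hL, hKL, hKsL, hLcard⟩ := exists_isSeparator_sepLE_sepLE hKmin.1 hKcard hKsmin.1
  have hKsL_eq : NR G Y Kstar = NR G Y L := by
    by_contra h
    exact hKsimp ⟨L, hL, ⟨hKsL, h⟩, hLcard⟩
  refine ⟨hKsL_eq ▸ hKL, fun h => hne ?_⟩
  exact (hKsmin.subset_of_nr_eq h.symm).antisymm (hKmin.subset_of_nr_eq h)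

/-- Suppose `G` has at least one `X`–`Y` separator, let `r` be
the minimum size of an `X`–`Y` separator and `K` the unique important `X`–`Y`
separator of size `r`.  Then every important `X`–`Y` separator `K* ≠ K`
satisfies `K* > K`. -/
theorem smallest_important_separator_lt
    {V : Type*} [Fintype V] (G : SimpleGraph V) (X Y K : Set V)
    (hXY : Disjoint X Y) (hex : ∃ K', IsSeparator G X Y K')
    (hK : IsImportantSeparator G X Y K ∧ K.ncard = minSepSize G X Y) :
    ∀ Kstar : Set V, IsImportantSeparator G X Y Kstar → Kstar ≠ K →
      SepLT G Y K Kstar :=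
  smallest_important_separator_lt_general G X Y K hK
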